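/- arXiv:1308.1260 — 5 statements merged into one kernel-verified Lean document; each statement's English description precedes it below -/
import Mathlib

section
/- Let q ≥ 2 be an integer and β > 0 with β(1 - (q/(2π)) sin(2π/q)) > 2. Then the map F_q(x) = (∫_{-π/q}^{π/q} sin(ω) e^{x sin ω} dω) / (∫_{-π/q}^{π/q} e^{x sin ω} dω) has a fixed point equation m = F_q(β m) with a nonzero solution m ≠ 0. -/
open Real intervalIntegral

/-- The mean-field magnetization map for a measure constrained to two opposite
arcs of the circle of arc-length `2π/q`. -/
noncomputable def Fq (q : ℕ) (x : ℝ) : ℝ :=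
    (∫ ω in (-π / q)..(π / q), Real.sin ω * Real.exp (x * Real.sin ω)) /
    (∫ ω in (-π / q)..(π / q), Real.exp (x * Real.sin ω))

/-- Numerator of `Fq` with general arc parameter. -/
noncomputable def numeAux (a x : ℝ) : ℝ :=
    ∫ ω in (-a)..a, Real.sin ω * Real.exp (x * Real.sin ω)

/-- Denominator of `Fq` with general arc parameter. -/
noncomputable def deneAux (a x : ℝ) : ℝ :=
    ∫ ω in (-a)..a, Real.exp (x * Real.sin ω)

lemma aux_pt (x t : ℝ) (hx : 0 ≤ x) :
    2 * (x * t ^ 2) ≤ t * Real.exp (x * t) + -t * Real.exp (x * -t) := by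
  have hs : t * Real.exp (x * t) + -t * Real.exp (x * -t)
      = 2 * (t * Real.sinh (x * t)) := by
    rw [Real.sinh_eq]
    have : x * -t = -(x * t) := by ring
    rw [this]
    ring
  rw [hs]
  rcases le_or_gt 0 t with ht | ht
  · have h1 : x * t ≤ Real.sinh (x * t) :=
      Real.self_le_sinh_iff.mpr (by positivity)
    nlinarith
  · have h1 : Real.sinh (x * t) ≤ x * t := by
      have h2 : -(x * t) ≤ Real.sinh (-(x * t)) :=
        Real.self_le_sinh_iff.mpr (by nlinarith)
      rw [Real.sinh_neg] at h2
      linarith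
    nlinarith

theorem stmt_1 (q : ℕ) (hq : 2 ≤ q) (β : ℝ) (hβ : 0 < β)
    (hcrit : β * (1 - (q / (2 * π)) * Real.sin (2 * π / q)) > 2) :
    ∃ m : ℝ, m ≠ 0 ∧ m = Fq q (β * m) := by
  have hπ := Real.pi_pos
  have hq0 : (0:ℝ) < q := by exact_mod_cast Nat.lt_of_lt_of_le (by norm_num) hq
  set a : ℝ := π / q with ha_def
  have ha : 0 < a := div_pos hπ hq0
  have ha2 : a ≤ π / 2 := by
    apply div_le_div_of_nonneg_left hπ.le (by norm_num)
    exact_mod_cast hq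
  -- Fq in terms of numeAux / deneAux
  have hFq : ∀ x, Fq q x = numeAux a x / deneAux a x := by
    intro x
    simp only [Fq, numeAux, deneAux, neg_div, ha_def]
  -- continuity of integrands
  have cnum : Continuous (numeAux a) := by
    apply intervalIntegral.continuous_parametric_intervalIntegral_of_continuous'
    fun_prop
  have cden : Continuous (deneAux a) := by
    apply intervalIntegral.continuous_parametric_intervalIntegral_of_continuous'
    fun_prop
  have intnum : ∀ x : ℝ, IntervalIntegrable
      (fun ω => Real.sin ω * Real.exp (x * Real.sin ω)) MeasureTheory.volume (-a) a :=
    fun x => (by fun_prop : Continuous fun ω => Real.sin ω * Real.exp (x * Real.sin ω)).intervalIntegrable _ _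
  have intden : ∀ x : ℝ, IntervalIntegrable
      (fun ω => Real.exp (x * Real.sin ω)) MeasureTheory.volume (-a) a :=
    fun x => (by fun_prop : Continuous fun ω => Real.exp (x * Real.sin ω)).intervalIntegrable _ _
  have hlt : -a < a := by linarith
  -- denominator positive
  have den_pos : ∀ x : ℝ, 0 < deneAux a x := fun x =>
    intervalIntegral_pos_of_pos (intden x) (fun ω => Real.exp_pos _) hlt
  -- sin ω ≤ sin a on [-a, a]
  have hsin_le : ∀ ω ∈ Set.Icc (-a) a, Real.sin ω ≤ Real.sin a := by
    intro ω hω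
    apply Real.strictMonoOn_sin.monotoneOn _ _ hω.2
    · constructor <;> [linarith [hω.1]; linarith [hω.2]]
    · constructor <;> linarith
  -- numerator ≤ sin a * denominator
  have num_le : ∀ x : ℝ, numeAux a x ≤ Real.sin a * deneAux a x := by
    intro x
    have h1 : numeAux a x ≤ ∫ ω in (-a)..a, Real.sin a * Real.exp (x * Real.sin ω) := by
      apply intervalIntegral.integral_mono_on hlt.le (intnum x)
      · exact (by fun_prop : Continuous fun ω => Real.sin a * Real.exp (x * Real.sin ω)).intervalIntegrable _ _
      · intro ω hω
        exact mul_le_mul_of_nonneg_right (hsin_le ω hω) (Real.exp_pos _).le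
    rwa [intervalIntegral.integral_const_mul] at h1
  -- S = ∫ sin², its value
  set S : ℝ := ∫ ω in (-a)..a, Real.sin ω ^ 2 with hS_def
  have hS_val : S = a - Real.sin a * Real.cos a := by
    rw [hS_def, integral_sin_sq]
    simp [Real.sin_neg, Real.cos_neg]
    ring
  -- numerator lower bound for x ≥ 0
  have num_ge : ∀ x : ℝ, 0 ≤ x → x * S ≤ numeAux a x := by
    intro x hx
    have hrefl : (∫ ω in (-a)..a, Real.sin (-ω) * Real.exp (x * Real.sin (-ω)))
        = numeAux a x := by
      rw [intervalIntegral.integral_comp_neg (fun ω => Real.sin ω * Real.exp (x * Real.sin ω))]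
      rw [neg_neg]
      rfl
    have hint2 : IntervalIntegrable
        (fun ω => Real.sin (-ω) * Real.exp (x * Real.sin (-ω))) MeasureTheory.volume (-a) a :=
      (by fun_prop : Continuous fun ω => Real.sin (-ω) * Real.exp (x * Real.sin (-ω))).intervalIntegrable _ _
    have h1 : (∫ ω in (-a)..a, 2 * (x * Real.sin ω ^ 2))
        ≤ ∫ ω in (-a)..a, (Real.sin ω * Real.exp (x * Real.sin ω)
            + Real.sin (-ω) * Real.exp (x * Real.sin (-ω))) := by
      apply intervalIntegral.integral_mono_on hlt.le
      · exact ((by fun_prop : Continuous fun ω => 2 * (x * Real.sin ω ^ 2)).intervalIntegrable _ _)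
      · exact (intnum x).add hint2
      · intro ω _
        have := aux_pt x (Real.sin ω) hx
        simpa [Real.sin_neg] using this
    rw [intervalIntegral.integral_add (intnum x) hint2, hrefl] at h1
    rw [intervalIntegral.integral_const_mul, intervalIntegral.integral_const_mul] at h1
    have hfold : (∫ ω in (-a)..a, Real.sin ω * Real.exp (x * Real.sin ω)) = numeAux a x := rfl
    rw [hfold] at h1
    linarith
  -- denominator upper bound for x ≥ 0
  have den_le : ∀ x : ℝ, 0 ≤ x → deneAux a x ≤ 2 * a * Real.exp x := by
    intro x hx
    have h1 : deneAux a x ≤ ∫ _ω in (-a)..a, Real.exp x := by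
      apply intervalIntegral.integral_mono_on hlt.le (intden x)
        (intervalIntegrable_const)
      intro ω _
      apply Real.exp_le_exp.mpr
      nlinarith [Real.sin_le_one ω]
    rw [intervalIntegral.integral_const] at h1
    calc deneAux a x ≤ (a - -a) • Real.exp x := h1
    _ = 2 * a * Real.exp x := by simp [smul_eq_mul]; ring
  -- critical constant
  set c : ℝ := β * S / (2 * a) with hc_def
  have hc1 : 1 < c := by
    rw [hc_def, lt_div_iff₀ (by positivity : (0:ℝ) < 2 * a), hS_val]
    have h2a : 2 * π / (q:ℝ) = 2 * a := by rw [ha_def]; ring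
    rw [h2a, Real.sin_two_mul] at hcrit
    have key : a * ((q:ℝ) / (2 * π)) = 1 / 2 := by
      rw [ha_def]; field_simp
    have hx := mul_lt_mul_of_pos_left hcrit ha
    have expand : a * (β * (1 - (q:ℝ) / (2 * π) * (2 * Real.sin a * Real.cos a)))
        = β * (a - Real.sin a * Real.cos a) := by
      have hq' : (q:ℝ) ≠ 0 := ne_of_gt hq0
      have hπ' : π ≠ 0 := ne_of_gt hπ
      rw [ha_def]
      field_simp
    rw [expand] at hx
    linarith
  have hS_pos : 0 < S := by
    have : 0 < β * S / (2 * a) := lt_trans one_pos hc1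
    by_contra h
    push_neg at h
    have : β * S / (2 * a) ≤ 0 := by
      apply div_nonpos_of_nonpos_of_nonneg
      · nlinarith
      · positivity
    linarith
  -- the small point m₀
  set m₀ : ℝ := Real.log c / (2 * β) with hm₀_def
  have hm₀ : 0 < m₀ := div_pos (Real.log_pos hc1) (by positivity)
  have hexp : Real.exp (β * m₀) < c := by
    have h1 : β * m₀ = Real.log c / 2 := by
      rw [hm₀_def]; field_simp
    rw [h1]
    calc Real.exp (Real.log c / 2) < Real.exp (Real.log c) := by
          apply Real.exp_lt_exp.mpr
          have := Real.log_pos hc1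
          linarith
    _ = c := Real.exp_log (by linarith)
  -- Fq (β * m₀) > m₀
  have hlow : m₀ < Fq q (β * m₀) := by
    rw [hFq]
    have hnum : β * m₀ * S ≤ numeAux a (β * m₀) := by
      have := num_ge (β * m₀) (by positivity)
      linarith [this]
    have hden2 : deneAux a (β * m₀) < 2 * a * c := by
      calc deneAux a (β * m₀) ≤ 2 * a * Real.exp (β * m₀) := den_le _ (by positivity)
      _ < 2 * a * c := by
          apply mul_lt_mul_of_pos_left hexp (by positivity)
    have hnum_pos : 0 < β * m₀ * S := by positivity
    calc m₀ = β * m₀ * S / (2 * a * c) := by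
          rw [hc_def]; field_simp
    _ < β * m₀ * S / deneAux a (β * m₀) := by
          apply div_lt_div_of_pos_left hnum_pos (den_pos _) hden2
    _ ≤ numeAux a (β * m₀) / deneAux a (β * m₀) := by
          exact div_le_div_of_nonneg_right hnum (den_pos _).le
  -- Fq (β * M) < M for M = m₀ + 2
  set M : ℝ := m₀ + 2 with hM_def
  have hhigh : Fq q (β * M) < M := by
    rw [hFq]
    have h1 : numeAux a (β * M) / deneAux a (β * M) ≤ Real.sin a :=
      (div_le_iff₀ (den_pos _)).mpr (num_le _)
    have h2 : Real.sin a ≤ 1 := Real.sin_le_one a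
    rw [hM_def]
    linarith
  -- IVT
  have hcont : Continuous fun m => Fq q (β * m) - m := by
    have : Continuous fun x => Fq q x := by
      have : (fun x => Fq q x) = fun x => numeAux a x / deneAux a x := by
        funext x; exact hFq x
      rw [this]
      exact cnum.div cden (fun x => (den_pos x).ne')
    fun_prop
  have hmM : m₀ ≤ M := by rw [hM_def]; linarith
  have hsub := intermediate_value_Icc' hmM hcont.continuousOn
  have h0 : (0:ℝ) ∈ Set.Icc ((fun m => Fq q (β * m) - m) M) ((fun m => Fq q (β * m) - m) m₀) := by
    constructor
    · simp only
      linarith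
    · simp only
      linarith
  obtain ⟨m, hm_mem, hm_eq⟩ := hsub h0
  refine ⟨m, ?_, ?_⟩
  · have : m₀ ≤ m := hm_mem.1
    intro h
    rw [h] at this
    linarith
  · simp only at hm_eq
    linarith
end

section
/- The function F_q(x) = (∫_{-π/q}^{π/q} sin(ω) e^{x sin ω} dω) / (∫_{-π/q}^{π/q} e^{x sin ω} dω) satisfies F_q'(0) = 1/2 - (q/(4π)) sin(2π/q). -/
open Real

/-!
Differentiating under the integral sign, the numerator and denominator of `F_q` have
derivatives `∫ sin² ω` and `∫ sin ω` at `0`, while their values there are `∫ sin ω = 0` and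
the arc length `2π/q`. By the quotient rule `F_q'(0) = (∫ sin²) / (2π/q)`, and on `[-c, c]`
one has `∫ sin² = c - sin c cos c = c - sin (2c) / 2`.
-/

open MeasureTheory intervalIntegral Metric

theorem hasDerivAt_intervalIntegral_mul_exp_mul_sin {g : ℝ → ℝ} (hg : Continuous g)
    (a b x₀ : ℝ) :
    HasDerivAt (fun x => ∫ ω in a..b, g ω * exp (x * sin ω))
      (∫ ω in a..b, g ω * sin ω * exp (x₀ * sin ω)) x₀ := by
  have hF : ∀ x, Continuous fun ω => g ω * exp (x * sin ω) := fun x => by fun_prop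
  refine (hasDerivAt_integral_of_dominated_loc_of_deriv_le
    (F' := fun x ω => g ω * sin ω * exp (x * sin ω))
    (bound := fun ω => |g ω| * exp (|x₀| + 1)) (ball_mem_nhds x₀ one_pos)
    (.of_forall fun x => (hF x).aestronglyMeasurable) ((hF x₀).intervalIntegrable _ _)
    (by fun_prop : Continuous _).aestronglyMeasurable ?_
    ((hg.abs.mul continuous_const).intervalIntegrable _ _) ?_).2
  · filter_upwards with ω _ x hx
    have hexp : x * sin ω ≤ |x₀| + 1 := calc
      x * sin ω ≤ |x| * |sin ω| := by rw [← abs_mul]; exact le_abs_self _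
      _ ≤ |x| := mul_le_of_le_one_right (abs_nonneg x) (abs_sin_le_one ω)
      _ ≤ |x₀| + 1 := by
        have := abs_sub_abs_le_abs_sub x x₀
        rw [mem_ball, dist_eq_norm, norm_eq_abs] at hx
        linarith
    rw [norm_eq_abs, abs_mul, abs_mul, abs_of_pos (exp_pos _)]
    calc |g ω| * |sin ω| * exp (x * sin ω) ≤ |g ω| * 1 * exp (|x₀| + 1) := by
          gcongr
          exact abs_sin_le_one ω
      _ = |g ω| * exp (|x₀| + 1) := by rw [mul_one]
  · filter_upwards with ω _ x _
    have := (((hasDerivAt_id x).mul_const (sin ω)).exp).const_mul (g ω)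
    simp only [id, one_mul] at this
    exact this.congr_deriv (by ring)

theorem integral_sin_symm (c : ℝ) : ∫ ω in -c..c, sin ω = 0 := by
  simp [integral_sin]

theorem integral_sin_sq_symm (c : ℝ) : ∫ ω in -c..c, sin ω ^ 2 = c - sin (2 * c) / 2 := by
  rw [integral_sin_sq, sin_neg, cos_neg, sin_two_mul]
  ring

theorem hasDerivAt_zero_magnetization_symm {c : ℝ} (hc : c ≠ 0) :
    HasDerivAt
      (fun x => (∫ ω in -c..c, sin ω * exp (x * sin ω)) / ∫ ω in -c..c, exp (x * sin ω))
      (1 / 2 - sin (2 * c) / (4 * c)) 0 := by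
  have hnum := hasDerivAt_intervalIntegral_mul_exp_mul_sin continuous_sin (-c) c 0
  have hden :=
    hasDerivAt_intervalIntegral_mul_exp_mul_sin (continuous_const (y := (1 : ℝ))) (-c) c 0
  simp only [zero_mul, exp_zero, mul_one, one_mul, ← sq, integral_sin_sq_symm,
    integral_sin_symm] at hnum hden
  have hnum0 : ∫ ω in -c..c, sin ω * exp (0 * sin ω) = 0 := by simp
  have hden0 : ∫ ω in -c..c, exp (0 * sin ω) = 2 * c := by simp; ring
  refine (hnum.div hden (hden0 ▸ mul_ne_zero two_ne_zero hc)).congr_deriv ?_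
  rw [hnum0, hden0]
  field_simp
  ring

theorem stmt_2 (q : ℕ) (hq : 2 ≤ q) :
    HasDerivAt (Fq q) (1 / 2 - (q / (4 * π)) * Real.sin (2 * π / q)) 0 := by
  have hq₀ : (0 : ℝ) < q := Nat.cast_pos.mpr (by omega)
  have hF : Fq q = fun x => (∫ ω in -(π / q)..π / q, sin ω * exp (x * sin ω)) /
      ∫ ω in -(π / q)..π / q, exp (x * sin ω) := by
    funext x
    rw [Fq, neg_div]
  rw [hF]
  convert hasDerivAt_zero_magnetization_symm (div_pos pi_pos hq₀).ne' using 1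
  rw [mul_div_assoc']
  field_simp
end

section
/- With M as above, for j ∈ {2,...,q-2} the eigenvalue of M on the Fourier vector u_j equals (q/(2π))([cos(2πj/q) - 1] ± i sin(2πj/q)); in particular its real part is strictly negative. -/
/-!
`Mlin` is circulant, so the Fourier vectors `u_j` are eigenvectors. Put `ζ = e^{2πi/q}` and
`u_j(l) = ζ^{jl}`. The shift part `δ_{l=i-1} - δ_{l=i}` contributes `(ζ^{-j} - 1) u_j(i)`. The
sine/cosine perturbation is a combination `A ζ^{i-l} + B ζ^{-(i-l)}` of the frequencies `±1`, and
pairing it with `u_j` leaves the geometric sums `∑_l ζ^{(j∓1)l}`, which vanish since `q ∤ j ∓ 1`.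
Hence the eigenvalue is `(q/2π)(ζ^{-j} - 1) = (q/2π)(cos θ - 1 - i sin θ)` with
`θ = 2πj/q ∈ (0, 2π)`, so `cos θ < 1`.
-/

open Real

/-- The circulant linearization matrix of the discrete mean-field rotator flow
at the equidistribution (indices mod `q`). -/
noncomputable def Mlin (q : ℕ) [NeZero q] (c₁ c₂ : ℝ) : Matrix (Fin q) (Fin q) ℂ :=
  fun i j =>
    ((((q : ℝ) / (2 * π)) *
      ((if j = i - 1 then 1 else 0) - (if j = i then 1 else 0)
        + c₁ * Real.sin (2 * π * ((i.val : ℤ) - (j.val : ℤ)) / q)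
        + c₂ * (Real.cos (2 * π * ((i.val : ℤ) - (j.val : ℤ)) / q)
              - Real.cos (2 * π * (((i.val : ℤ) - (j.val : ℤ)) - 1) / q))) : ℝ) : ℂ)

/-- The discrete Fourier vector `u_k = (e^{i 2π k l / q})_l`. -/
noncomputable def uvec (q : ℕ) (k : ℕ) : Fin q → ℂ :=
  fun l => Complex.exp (Complex.I * (2 * π * k * (l.val : ℕ) / q))

namespace IsPrimitiveRoot

variable {K : Type*} [Field K] {ζ : K} {q : ℕ}

theorem zpow_eq_zpow_of_modEq (hζ : IsPrimitiveRoot ζ q) {m n : ℤ} (h : m ≡ n [ZMOD q]) :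
    ζ ^ m = ζ ^ n := by
  rcases eq_or_ne q 0 with rfl | hq
  · exact congrArg (ζ ^ ·) (Int.modEq_zero_iff.1 (by simpa using h))
  · have hmn : ζ ^ (m - n) = 1 := (hζ.zpow_eq_one_iff_dvd _).2 (Int.ModEq.dvd h.symm)
    rw [← sub_add_cancel m n, zpow_add₀ (hζ.ne_zero hq), hmn, one_mul]

theorem sum_zpow_mul_val_eq_zero (hζ : IsPrimitiveRoot ζ q) {m : ℤ} (hm : ¬ (q : ℤ) ∣ m) :
    ∑ l : Fin q, ζ ^ (m * l.val) = 0 := by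
  have hne : ζ ^ m - 1 ≠ 0 := sub_ne_zero.2 fun h => hm ((hζ.zpow_eq_one_iff_dvd m).1 h)
  have hpow : (ζ ^ m) ^ q = 1 := by
    rw [← zpow_natCast, ← zpow_mul, mul_comm, zpow_mul, hζ.zpow_eq_one, one_zpow]
  have hgeom := geom_sum_mul (ζ ^ m) q
  rw [hpow, sub_self, mul_eq_zero, or_iff_left hne] at hgeom
  simpa [zpow_mul, Fin.sum_univ_eq_sum_range (fun l => (ζ ^ m) ^ l)] using hgeom

theorem sum_frequency_one_mul_eq_zero (hζ : IsPrimitiveRoot ζ q) (A B : K) (i : ℤ) {j : ℤ}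
    (hj₁ : ¬ (q : ℤ) ∣ j - 1) (hj₂ : ¬ (q : ℤ) ∣ j + 1) :
    ∑ l : Fin q, (A * ζ ^ (i - l.val) + B * ζ ^ (-(i - l.val))) * ζ ^ (j * l.val) = 0 := by
  rcases eq_or_ne q 0 with rfl | hq
  · simp
  have hζ₀ := hζ.ne_zero hq
  have hterm : ∀ l : Fin q, (A * ζ ^ (i - l.val) + B * ζ ^ (-(i - l.val))) * ζ ^ (j * l.val)
      = A * ζ ^ i * ζ ^ ((j - 1) * l.val) + B * ζ ^ (-i) * ζ ^ ((j + 1) * l.val) := by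
    intro l
    simp only [add_mul, mul_assoc, ← zpow_add₀ hζ₀]
    ring_nf
  simp only [hterm, Finset.sum_add_distrib, ← Finset.mul_sum,
    hζ.sum_zpow_mul_val_eq_zero hj₁, hζ.sum_zpow_mul_val_eq_zero hj₂, mul_zero, add_zero]

end IsPrimitiveRoot

noncomputable def fourierRoot (q : ℕ) : ℂ := Complex.exp (2 * π * Complex.I / q)

section FourierRoot

variable {q : ℕ}

theorem isPrimitiveRoot_fourierRoot (hq : q ≠ 0) : IsPrimitiveRoot (fourierRoot q) q :=
  Complex.isPrimitiveRoot_exp q hq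

theorem fourierRoot_zpow (n : ℤ) :
    fourierRoot q ^ n = Complex.exp ((2 * π * n / q : ℝ) * Complex.I) := by
  rw [fourierRoot, ← Complex.exp_int_mul]
  push_cast
  ring_nf

theorem ofReal_cos_two_pi_mul_div (n : ℤ) :
    (Real.cos (2 * π * n / q) : ℂ) = (fourierRoot q ^ n + fourierRoot q ^ (-n)) / 2 := by
  rw [fourierRoot_zpow, fourierRoot_zpow, Complex.ofReal_cos]
  push_cast
  rw [eq_div_iff two_ne_zero, mul_comm, Complex.two_cos]
  ring_nf

theorem ofReal_sin_two_pi_mul_div (n : ℤ) :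
    (Real.sin (2 * π * n / q) : ℂ)
      = (fourierRoot q ^ (-n) - fourierRoot q ^ n) * Complex.I / 2 := by
  rw [fourierRoot_zpow, fourierRoot_zpow, Complex.ofReal_sin]
  push_cast
  rw [eq_div_iff two_ne_zero, mul_comm, Complex.two_sin]
  ring_nf

theorem fourierRoot_zpow_neg_natCast (k : ℕ) :
    fourierRoot q ^ (-(k : ℤ))
      = (Real.cos (2 * π * k / q) : ℂ) - (Real.sin (2 * π * k / q) : ℂ) * Complex.I := by
  rw [fourierRoot_zpow, Complex.ofReal_cos, Complex.ofReal_sin, Complex.cos_sub_sin_I]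
  push_cast
  ring_nf

theorem uvec_eq_fourierRoot_zpow (k : ℕ) (l : Fin q) :
    uvec q k l = fourierRoot q ^ ((k : ℤ) * l.val) := by
  rw [uvec, fourierRoot_zpow]
  push_cast
  ring_nf

end FourierRoot

theorem Fin.intCast_val_sub_one_modEq {q : ℕ} [NeZero q] (i : Fin q) :
    ((i - 1 : Fin q).val : ℤ) ≡ i.val - 1 [ZMOD q] := by
  rw [Fin.intCast_val_sub_eq_sub_add_ite, Fin.val_one']
  have hite : (if (1 : Fin q) ≤ i then (0 : ℤ) else q) ≡ 0 [ZMOD q] := by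
    split_ifs
    · rfl
    · exact Int.modEq_zero_iff_dvd.2 dvd_rfl
  simpa using ((Int.ModEq.refl (i.val : ℤ)).sub (Int.mod_modEq 1 q)).add hite

theorem exists_perturbation_eq_frequency_one (q : ℕ) (c₁ c₂ : ℝ) : ∃ A B : ℂ, ∀ n : ℤ,
    ((c₁ * Real.sin (2 * π * n / q)
        + c₂ * (Real.cos (2 * π * n / q) - Real.cos (2 * π * (n - 1) / q)) : ℝ) : ℂ)
      = A * fourierRoot q ^ n + B * fourierRoot q ^ (-n) := by
  have hζ : fourierRoot q ≠ 0 := Complex.exp_ne_zero _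
  refine ⟨(c₂ * (1 - fourierRoot q ^ (-1 : ℤ)) - c₁ * Complex.I) / 2,
    (c₂ * (1 - fourierRoot q) + c₁ * Complex.I) / 2, fun n => ?_⟩
  have hshift : (2 * π * (n - 1) / q : ℝ) = 2 * π * ((n - 1 : ℤ) : ℝ) / q := by push_cast; ring
  rw [hshift, Complex.ofReal_add, Complex.ofReal_mul, Complex.ofReal_mul, Complex.ofReal_sub,
    ofReal_sin_two_pi_mul_div, ofReal_cos_two_pi_mul_div, ofReal_cos_two_pi_mul_div,
    neg_sub, zpow_sub₀ hζ, zpow_sub₀ hζ, zpow_neg, zpow_neg, zpow_one]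
  field_simp
  ring

theorem exists_Mlin_apply_eq (q : ℕ) [NeZero q] (c₁ c₂ : ℝ) : ∃ A B : ℂ, ∀ i l : Fin q,
    Mlin q c₁ c₂ i l = ((q / (2 * π) : ℝ) : ℂ) *
      ((if l = i - 1 then 1 else 0) - (if l = i then 1 else 0)
        + (A * fourierRoot q ^ ((i.val : ℤ) - l.val)
          + B * fourierRoot q ^ (-((i.val : ℤ) - l.val)))) := by
  obtain ⟨A, B, hAB⟩ := exists_perturbation_eq_frequency_one q c₁ c₂
  refine ⟨A, B, fun i l => ?_⟩
  have h := hAB ((i.val : ℤ) - l.val)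
  rw [Mlin]
  split_ifs <;> push_cast at h ⊢ <;> linear_combination (q / (2 * π) : ℂ) * h

theorem Mlin_mulVec_uvec (q : ℕ) [NeZero q] (c₁ c₂ : ℝ) {j : ℕ}
    (hj₁ : ¬ (q : ℤ) ∣ j - 1) (hj₂ : ¬ (q : ℤ) ∣ j + 1) :
    (Mlin q c₁ c₂).mulVec (uvec q j)
      = (((q / (2 * π) : ℝ) : ℂ) * (fourierRoot q ^ (-(j : ℤ)) - 1)) • uvec q j := by
  have hζ := isPrimitiveRoot_fourierRoot (NeZero.ne q)
  obtain ⟨A, B, hM⟩ := exists_Mlin_apply_eq q c₁ c₂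
  ext i
  have hshift : uvec q j (i - 1) = fourierRoot q ^ (-(j : ℤ)) * uvec q j i := by
    rw [uvec_eq_fourierRoot_zpow, uvec_eq_fourierRoot_zpow, ← zpow_add₀ (hζ.ne_zero (NeZero.ne q))]
    refine hζ.zpow_eq_zpow_of_modEq ?_
    convert (Fin.intCast_val_sub_one_modEq i).mul_left (j : ℤ) using 1
    ring
  have hdiff : ∑ l : Fin q, ((if l = i - 1 then 1 else 0) - (if l = i then 1 else 0)) * uvec q j l
      = uvec q j (i - 1) - uvec q j i := by
    simp [sub_mul, Finset.sum_sub_distrib]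
  have hfreq := hζ.sum_frequency_one_mul_eq_zero A B i hj₁ hj₂
  simp only [← uvec_eq_fourierRoot_zpow] at hfreq
  calc (Mlin q c₁ c₂).mulVec (uvec q j) i
      = ((q / (2 * π) : ℝ) : ℂ) * (∑ l : Fin q,
          ((if l = i - 1 then 1 else 0) - (if l = i then 1 else 0)) * uvec q j l
        + ∑ l : Fin q, (A * fourierRoot q ^ ((i.val : ℤ) - l.val)
          + B * fourierRoot q ^ (-((i.val : ℤ) - l.val))) * uvec q j l) := by
        simp only [Matrix.mulVec, dotProduct, hM, mul_assoc, add_mul, Finset.sum_add_distrib,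
          ← Finset.mul_sum]
    _ = _ := by
        rw [hdiff, hfreq, hshift, Pi.smul_apply, smul_eq_mul]
        ring

theorem cos_two_pi_mul_div_lt_one {k q : ℕ} (hk : 0 < k) (hkq : k < q) :
    Real.cos (2 * π * k / q) < 1 := by
  have hq : (0 : ℝ) < q := by exact_mod_cast hk.trans hkq
  have hpos : 0 < 2 * π * k / q := by positivity
  have hlt : 2 * π * k / q < 2 * π := by
    rw [div_lt_iff₀ hq]
    exact mul_lt_mul_of_pos_left (by exact_mod_cast hkq) (by positivity)
  refine (Real.cos_le_one _).lt_of_ne fun h => hpos.ne' ?_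
  exact (Real.cos_eq_one_iff_of_lt_of_lt (by linarith) hlt).1 h

theorem stmt_7_general (q : ℕ) [NeZero q] (c₁ c₂ : ℝ) (j : ℕ)
    (hj : 2 ≤ j) (hj' : j ≤ q - 2) :
    ∃ ε : ℝ, (ε = 1 ∨ ε = -1) ∧
      (Mlin q c₁ c₂).mulVec (uvec q j) =
        ((((q : ℝ) / (2 * π)) * (Real.cos (2 * π * j / q) - 1) : ℝ) +
          (ε * ((q : ℝ) / (2 * π)) * Real.sin (2 * π * j / q) : ℝ) * Complex.I) •
          uvec q j ∧
      (((q : ℝ) / (2 * π)) * (Real.cos (2 * π * j / q) - 1) : ℝ) < 0 := by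
  have hj₁ : ¬ (q : ℤ) ∣ j - 1 := fun h => by have := Int.le_of_dvd (by omega) h; omega
  have hj₂ : ¬ (q : ℤ) ∣ j + 1 := fun h => by have := Int.le_of_dvd (by omega) h; omega
  refine ⟨-1, Or.inr rfl, ?_, ?_⟩
  · rw [Mlin_mulVec_uvec q c₁ c₂ hj₁ hj₂, fourierRoot_zpow_neg_natCast]
    push_cast
    ring_nf
  · have hq : (0 : ℝ) < q := Nat.cast_pos.2 (NeZero.pos q)
    exact mul_neg_of_pos_of_neg (by positivity)
      (sub_neg.2 (cos_two_pi_mul_div_lt_one (by omega) (by omega)))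

theorem stmt_7 (q : ℕ) [NeZero q] (hq : 2 ≤ q) (c₁ c₂ : ℝ) (j : ℕ)
    (hj : 2 ≤ j) (hj' : j ≤ q - 2) :
    ∃ ε : ℝ, (ε = 1 ∨ ε = -1) ∧
      (Mlin q c₁ c₂).mulVec (uvec q j) =
        ((((q : ℝ) / (2 * π)) * (Real.cos (2 * π * j / q) - 1) : ℝ) +
          (ε * ((q : ℝ) / (2 * π)) * Real.sin (2 * π * j / q) : ℝ) * Complex.I) •
          uvec q j ∧
      (((q : ℝ) / (2 * π)) * (Real.cos (2 * π * j / q) - 1) : ℝ) < 0 :=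
  stmt_7_general q c₁ c₂ j hj hj'
end

section
/- With M as above, the eigenvalue of M on the Fourier mode j = 1 equals (q/(2π))([(c_2 q/2 - 1)(1 - cos(2π/q))] + i[(c_2 q/2 - 1) sin(2π/q) - c_1 q/2]), and its real part is strictly positive if and only if c_2 q/2 > 1. -/
open Real

/-- The eigenvalue of `Mlin` on the first Fourier mode. -/
noncomputable def lam1 (q : ℕ) (c₁ c₂ : ℝ) : ℂ :=
  (((q : ℝ) / (2 * π)) * ((c₂ * q / 2 - 1) * (1 - Real.cos (2 * π / q))) : ℝ) +
    (((q : ℝ) / (2 * π)) * ((c₂ * q / 2 - 1) * Real.sin (2 * π / q) - c₁ * q / 2) : ℝ) *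
      Complex.I

/-!
`Mlin` is `q / (2π)` times the circulant matrix of the kernel
`f d = δ_{d=1} - δ_{d=0} + c₁ sin (2πd/q) + c₂ (cos (2πd/q) - cos (2π(d-1)/q))`, and the character
`ψ d = ζ ^ d`, `ζ = exp (2πi/q)`, of `Fin q` is an eigenvector of every circulant matrix, with
eigenvalue `∑ d, f d ψ(-d)`. Writing `sin` and `cos` by Euler's formulas, the summands are affine in
`ζ^(-2d)`, whose sum vanishes because `ζ² ≠ 1` when `q ≥ 3`. What remains is
`(c₂q/2 - 1)(1 - ζ⁻¹) - i c₁q/2`, whose real part `(c₂q/2 - 1)(1 - cos (2π/q))` has the sign of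
`c₂q/2 - 1`.
-/

open Complex Matrix

namespace Fin

def powAddChar (q : ℕ) [NeZero q] {M : Type*} [Monoid M] {ζ : M} (hζ : ζ ^ q = 1) :
    AddChar (Fin q) M where
  toFun a := ζ ^ a.val
  map_zero_eq_one' := by simp
  map_add_eq_mul' x y := by simp only [Fin.val_add, ← pow_eq_pow_mod _ hζ, ← pow_add]

noncomputable def stdAddChar (q : ℕ) [NeZero q] : AddChar (Fin q) ℂ :=
  powAddChar q (isPrimitiveRoot_exp q (NeZero.ne q)).pow_eq_one

variable {q : ℕ} [NeZero q]

theorem stdAddChar_eq_exp (l : Fin q) : stdAddChar q l = exp (↑(2 * π * l.val / q) * I) := by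
  rw [stdAddChar, powAddChar, AddChar.coe_mk, ← Complex.exp_nat_mul]
  congr 1
  push_cast
  ring

theorem stdAddChar_one (hq : 1 < q) : stdAddChar q 1 = exp (2 * π * I / q) := by
  rw [stdAddChar, powAddChar, AddChar.coe_mk, val_one', Nat.mod_eq_of_lt hq, pow_one]

theorem stdAddChar_ne_zero (l : Fin q) : stdAddChar q l ≠ 0 := by
  rw [stdAddChar_eq_exp]
  exact exp_ne_zero _

theorem sum_stdAddChar_inv_sq (hq : 2 < q) : ∑ d, (stdAddChar q d)⁻¹ ^ 2 = 0 := by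
  simp only [← AddChar.map_neg_eq_inv, ← AddChar.inv_apply, ← AddChar.pow_apply]
  refine AddChar.sum_eq_zero_of_ne_one (AddChar.ne_one_iff.mpr ⟨-1, ?_⟩)
  rw [AddChar.pow_apply, AddChar.inv_apply, neg_neg, stdAddChar_one (by omega)]
  exact (isPrimitiveRoot_exp q (NeZero.ne q)).pow_ne_one_of_pos_of_lt two_ne_zero hq

end Fin

theorem Complex.ofReal_cos_eq_of_exp_eq {x : ℝ} {z : ℂ} (h : exp (x * I) = z) :
    (Real.cos x : ℂ) = (z + z⁻¹) / 2 := by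
  rw [← h, ← exp_neg, ofReal_cos, cos, neg_mul]

theorem Complex.ofReal_sin_eq_of_exp_eq {x : ℝ} {z : ℂ} (h : exp (x * I) = z) :
    (Real.sin x : ℂ) = (z - z⁻¹) / (2 * I) := by
  rw [← h, ← exp_neg, ofReal_sin, sin, neg_mul]
  field_simp
  rw [I_sq]
  ring

theorem Matrix.circulant_mulVec_addChar {G R : Type*} [AddGroup G] [Fintype G] [CommSemiring R]
    (v : G → R) (ψ : AddChar G R) :
    circulant v *ᵥ ψ = (∑ d, v d * ψ (-d)) • ⇑ψ := by
  ext i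
  simp only [mulVec, dotProduct, circulant_apply, Pi.smul_apply, smul_eq_mul, Finset.sum_mul]
  refine Fintype.sum_equiv (Equiv.subLeft i) _ _ fun j => ?_
  rw [Equiv.subLeft_apply, neg_sub, mul_assoc, ← AddChar.map_add_eq_mul, sub_add_cancel]

theorem uvec_one_eq_stdAddChar (q : ℕ) [NeZero q] : uvec q 1 = Fin.stdAddChar q := by
  ext l
  rw [uvec, Fin.stdAddChar_eq_exp]
  congr 1
  push_cast
  ring

noncomputable def mlinKernel (q : ℕ) [NeZero q] (c₁ c₂ : ℝ) (d : Fin q) : ℂ :=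
  (if d = 1 then 1 else 0) - (if d = 0 then 1 else 0)
    + c₁ * (Fin.stdAddChar q d - (Fin.stdAddChar q d)⁻¹) / (2 * I)
    + c₂ * ((Fin.stdAddChar q d + (Fin.stdAddChar q d)⁻¹) / 2
      - (Fin.stdAddChar q (d - 1) + (Fin.stdAddChar q (d - 1))⁻¹) / 2)

theorem Mlin_eq_smul_circulant {q : ℕ} [NeZero q] (hq : 1 < q) (c₁ c₂ : ℝ) :
    Mlin q c₁ c₂ = ((q : ℂ) / (2 * π)) • circulant (mlinKernel q c₁ c₂) := by
  ext i j
  have h₀ : exp (↑(2 * π * (((i.val : ℤ) : ℝ) - ((j.val : ℤ) : ℝ)) / q) * I)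
      = Fin.stdAddChar q (i - j) := by
    rw [AddChar.map_sub_eq_div, Fin.stdAddChar_eq_exp, Fin.stdAddChar_eq_exp, ← Complex.exp_sub]
    congr 1
    push_cast
    ring
  have h₁ : exp (↑(2 * π * ((((i.val : ℤ) : ℝ) - ((j.val : ℤ) : ℝ)) - 1) / q) * I)
      = Fin.stdAddChar q (i - j - 1) := by
    rw [AddChar.map_sub_eq_div, ← h₀, Fin.stdAddChar_one hq, ← Complex.exp_sub]
    congr 1
    push_cast
    ring
  have hδ₁ : j = i - 1 ↔ i - j = 1 := by
    rw [eq_sub_iff_add_eq, sub_eq_iff_eq_add', eq_comm, add_comm]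
  have hδ₀ : j = i ↔ i - j = 0 := by rw [sub_eq_zero, eq_comm]
  simp only [Mlin, circulant_apply, Matrix.smul_apply, smul_eq_mul, mlinKernel, ofReal_mul,
    ofReal_add, ofReal_sub, apply_ite ofReal, ofReal_one, ofReal_zero, ofReal_div, ofReal_ofNat,
    ofReal_natCast, ofReal_sin_eq_of_exp_eq h₀, ofReal_cos_eq_of_exp_eq h₀,
    ofReal_cos_eq_of_exp_eq h₁, hδ₁, hδ₀]
  ring

theorem sum_mlinKernel_mul_stdAddChar_neg {q : ℕ} [NeZero q] (hq : 2 < q) (c₁ c₂ : ℝ) :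
    ∑ d, mlinKernel q c₁ c₂ d * Fin.stdAddChar q (-d)
      = (c₂ * q / 2 - 1) * (1 - (Fin.stdAddChar q 1)⁻¹) - c₁ * q * I / 2 := by
  have hsq := Fin.sum_stdAddChar_inv_sq hq
  have hne := Fin.stdAddChar_ne_zero (q := q)
  set ψ := Fin.stdAddChar q with hψ
  have hterm : ∀ d, mlinKernel q c₁ c₂ d * ψ (-d)
      = ((if d = 1 then 1 else 0) * (ψ d)⁻¹ - (if d = 0 then 1 else 0) * (ψ d)⁻¹)
        + c₁ / (2 * I) * (1 - (ψ d)⁻¹ ^ 2)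
        + c₂ / 2 * (1 - (ψ 1)⁻¹ + (1 - ψ 1) * (ψ d)⁻¹ ^ 2) := by
    intro d
    rw [mlinKernel, ← hψ, AddChar.map_neg_eq_inv, AddChar.map_sub_eq_div]
    field_simp [hne]
    ring
  simp only [hterm, Finset.sum_add_distrib, Finset.sum_sub_distrib, ite_mul, one_mul, zero_mul,
    Finset.sum_ite_eq', Finset.mem_univ, if_true, ← Finset.mul_sum, hsq,
    Finset.sum_const, Finset.card_univ, Fintype.card_fin, nsmul_eq_mul, AddChar.map_zero_eq_one]
  field_simp
  linear_combination (c₁ * q : ℂ) * I_sq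

theorem lam1_eq {q : ℕ} [NeZero q] (hq : 1 < q) (c₁ c₂ : ℝ) :
    lam1 q c₁ c₂ = ((q : ℂ) / (2 * π))
      * ((c₂ * q / 2 - 1) * (1 - (Fin.stdAddChar q 1)⁻¹) - c₁ * q * I / 2) := by
  have hζ : (Fin.stdAddChar q 1)⁻¹ = Real.cos (2 * π / q) - Real.sin (2 * π / q) * I := by
    rw [Fin.stdAddChar_one hq, ← Complex.exp_neg,
      show -(2 * π * I / q) = ((-(2 * π / q) : ℝ) : ℂ) * I by push_cast; ring,
      exp_mul_I, ← ofReal_cos, ← ofReal_sin, Real.cos_neg, Real.sin_neg, ofReal_neg]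
    ring
  rw [lam1, hζ]
  push_cast
  ring

theorem one_sub_cos_two_pi_div_pos {q : ℕ} (hq : 2 ≤ q) : 0 < 1 - Real.cos (2 * π / q) := by
  have hq' : (2 : ℝ) ≤ q := by exact_mod_cast hq
  rw [sub_pos, ← Real.cos_zero]
  refine Real.cos_lt_cos_of_nonneg_of_le_pi le_rfl ?_ (by positivity)
  rw [div_le_iff₀ (by positivity)]
  nlinarith [Real.pi_pos]

theorem lam1_re_pos_iff {q : ℕ} (hq : 2 ≤ q) (c₁ c₂ : ℝ) :
    0 < (lam1 q c₁ c₂).re ↔ 1 < c₂ * q / 2 := by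
  have hre : (lam1 q c₁ c₂).re = q / (2 * π) * ((c₂ * q / 2 - 1) * (1 - Real.cos (2 * π / q))) := by
    simp only [lam1, add_re, ofReal_re, mul_re, ofReal_im, I_re, I_im]
    ring
  rw [hre, mul_pos_iff_of_pos_left (by positivity),
    mul_pos_iff_of_pos_right (one_sub_cos_two_pi_div_pos hq), sub_pos]

theorem stmt_8 (q : ℕ) [NeZero q] (hq : 3 ≤ q) (c₁ c₂ : ℝ) :
    (Mlin q c₁ c₂).mulVec (uvec q 1) = lam1 q c₁ c₂ • uvec q 1 ∧
    (0 < (lam1 q c₁ c₂).re ↔ 1 < c₂ * q / 2) := by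
  refine ⟨?_, lam1_re_pos_iff (by omega) c₁ c₂⟩
  rw [uvec_one_eq_stdAddChar, Mlin_eq_smul_circulant (by omega), Matrix.smul_mulVec,
    circulant_mulVec_addChar, sum_mlinKernel_mul_stdAddChar_neg (by omega), smul_smul,
    lam1_eq (by omega)]
end

section
/- Let λ₀, λ₁ be probability measures on a measurable space with densities h_t = e^{u_t} 1_A / ∫_A e^{u_t} dα with respect to a finite measure α, where u_t = u_0 + t(u_1 − u_0) for bounded measurable u_0, u_1 and A a measurable set of positive α-measure. Then 2‖λ₁ − λ₀‖_{TV} ≤ ∫_0^1 λ_t(|v − λ_t(v)|) dt where v = u_1 − u_0 and λ_t(dx) = h_t(x) α(dx). -/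
open MeasureTheory

variable {Ω : Type*} [MeasurableSpace Ω]

/-- The interpolated exponential density `h_t = e^{u_t} 1_A / ∫_A e^{u_t} dα`
with `u_t = u_0 + t (u_1 - u_0)`. -/
noncomputable def hdens (α : Measure Ω) (A : Set Ω) (u₀ u₁ : Ω → ℝ) (t : ℝ) (x : Ω) : ℝ :=
  A.indicator (fun y => Real.exp (u₀ y + t * (u₁ y - u₀ y))) x /
    ∫ y in A, Real.exp (u₀ y + t * (u₁ y - u₀ y)) ∂α

/-- The measure `λ_t(dx) = h_t(x) α(dx)`. -/
noncomputable def lamMeas (α : Measure Ω) (A : Set Ω) (u₀ u₁ : Ω → ℝ) (t : ℝ) : Measure Ω :=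
  α.withDensity fun x => ENNReal.ofReal (hdens α A u₀ u₁ t x)

/-! The signed measure `λ₁ - λ₀` has density `h₁ - h₀` with respect to `α`, so its total
variation is at most `∫ |h₁ - h₀| dα`. For fixed `x`, `t ↦ h_t(x)` is differentiable with
derivative `h_t(x) (v(x) - λ_t(v))`, because the normalising constant `Z_t = ∫_A e^{u_t} dα` has
derivative `∫_A v e^{u_t} dα = Z_t λ_t(v)`. The fundamental theorem of calculus and Fubini then
bound `∫ |h₁ - h₀| dα` by `∫₀¹ ∫ h_t |v - λ_t(v)| dα dt = ∫₀¹ λ_t(|v - λ_t(v)|) dt`. -/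

open Real Set

theorem abs_add_mul_le_of_abs_le {a b C D : ℝ} (ha : |a| ≤ C) (hb : |b| ≤ D) (s : ℝ) :
    |a + s * b| ≤ C + |s| * D :=
  (abs_add_le _ _).trans (by rw [abs_mul]; gcongr)

theorem abs_sub_le_two_mul_of_abs_le {a b C : ℝ} (ha : |a| ≤ C) (hb : |b| ≤ C) :
    |b - a| ≤ 2 * C :=
  (abs_sub _ _).trans (by linarith)

theorem abs_add_mul_sub_le_of_abs_le {a b C t : ℝ} (ha : |a| ≤ C) (hb : |b| ≤ C)
    (ht : t ∈ Icc (0 : ℝ) 1) : |a + t * (b - a)| ≤ C := by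
  rw [abs_le] at *
  obtain ⟨ht₀, ht₁⟩ := ht
  constructor <;> nlinarith

namespace MeasureTheory

theorem SignedMeasure.totalVariation_withDensityᵥ_le (μ : Measure Ω) (d : Ω → ℝ) :
    SignedMeasure.totalVariation (μ.withDensityᵥ d) ≤ μ.withDensity fun x => ‖d x‖ₑ := by
  rw [SignedMeasure.totalVariation_eq_variation]
  refine VectorMeasure.variation_le_of_forall_enorm_le fun E hE => ?_
  by_cases hd : Integrable d μ
  · rw [withDensityᵥ_apply hd hE, withDensity_apply _ hE]
    exact enorm_integral_le_lintegral_enorm _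
  · simp [Measure.withDensityᵥ, hd]

theorem SignedMeasure.totalVariation_withDensityᵥ_toReal_le {μ : Measure Ω} {d : Ω → ℝ}
    (hd : Integrable d μ) :
    (SignedMeasure.totalVariation (μ.withDensityᵥ d) univ).toReal ≤ ∫ x, |d x| ∂μ := by
  have h := totalVariation_withDensityᵥ_le μ d univ
  rw [withDensity_apply _ MeasurableSet.univ, Measure.restrict_univ] at h
  simp only [← Real.norm_eq_abs]
  rw [integral_norm_eq_lintegral_enorm hd.aestronglyMeasurable]
  exact ENNReal.toReal_mono hd.2.ne h

theorem Measure.toSignedMeasure_withDensity_ofReal {μ : Measure Ω} {f : Ω → ℝ}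
    (hf : Integrable f μ) (hf₀ : 0 ≤ᵐ[μ] f)
    [IsFiniteMeasure (μ.withDensity fun x => ENNReal.ofReal (f x))] :
    (μ.withDensity fun x => ENNReal.ofReal (f x)).toSignedMeasure = μ.withDensityᵥ f := by
  ext E hE
  rw [toSignedMeasure_apply_measurable hE, withDensityᵥ_apply hf hE, measureReal_def,
    withDensity_apply _ hE, integral_eq_lintegral_of_nonneg_ae (ae_restrict_of_ae hf₀)
      hf.aestronglyMeasurable.restrict]

theorem integral_abs_sub_le_intervalIntegral_integral_abs_deriv
    {μ : Measure Ω} [SFinite μ] {h h' : ℝ → Ω → ℝ} {a b : ℝ} (hab : a ≤ b)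
    (hderiv : ∀ x, ∀ t ∈ Icc a b, HasDerivAt (h · x) (h' t x) t)
    (hint : Integrable (Function.uncurry h') ((volume.restrict (Ioc a b)).prod μ)) :
    ∫ x, |h b x - h a x| ∂μ ≤ ∫ t in a..b, ∫ x, |h' t x| ∂μ := by
  have hpointwise : ∀ᵐ x ∂μ, |h b x - h a x| ≤ ∫ t in Ioc a b, |h' t x| := by
    filter_upwards [hint.prod_left_ae] with x hx
    have hx' : IntervalIntegrable (h' · x) volume a b :=
      (intervalIntegrable_iff_integrableOn_Ioc_of_le hab).2 hx
    have hftc := intervalIntegral.integral_eq_sub_of_hasDerivAt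
      (by rw [uIcc_of_le hab]; exact hderiv x) hx'
    rw [← hftc, ← intervalIntegral.integral_of_le hab]
    exact intervalIntegral.abs_integral_le_integral_abs hab
  calc ∫ x, |h b x - h a x| ∂μ ≤ ∫ x, (∫ t in Ioc a b, |h' t x|) ∂μ :=
        integral_mono_of_nonneg (ae_of_all _ fun _ => abs_nonneg _)
          hint.abs.integral_prod_right hpointwise
    _ = ∫ t in Ioc a b, ∫ x, |h' t x| ∂μ := (integral_integral_swap hint.abs).symm
    _ = ∫ t in a..b, ∫ x, |h' t x| ∂μ := (intervalIntegral.integral_of_le hab).symm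

theorem integrable_exp_add_mul {μ : Measure Ω} [IsFiniteMeasure μ] {w v : Ω → ℝ}
    (hw : Measurable w) (hv : Measurable v) {C D : ℝ} (hwC : ∀ x, |w x| ≤ C)
    (hvD : ∀ x, |v x| ≤ D) (t : ℝ) : Integrable (fun x => exp (w x + t * v x)) μ :=
  .of_bound (by fun_prop) (exp (C + |t| * D)) (ae_of_all _ fun x => by
    rw [Real.norm_of_nonneg (exp_pos _).le]
    exact exp_le_exp.2 ((le_abs_self _).trans (abs_add_mul_le_of_abs_le (hwC x) (hvD x) t)))

theorem hasDerivAt_integral_exp_add_mul {μ : Measure Ω} [IsFiniteMeasure μ] {w v : Ω → ℝ}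
    (hw : Measurable w) (hv : Measurable v) {C D : ℝ} (hwC : ∀ x, |w x| ≤ C)
    (hvD : ∀ x, |v x| ≤ D) (t : ℝ) :
    HasDerivAt (fun s => ∫ x, exp (w x + s * v x) ∂μ) (∫ x, v x * exp (w x + t * v x) ∂μ) t := by
  have hbound : ∀ x, ∀ s ∈ Metric.ball t 1,
      ‖v x * exp (w x + s * v x)‖ ≤ D * exp (C + (|t| + 1) * D) := by
    intro x s hs
    have hs' : |s| ≤ |t| + 1 := by
      have := abs_sub_abs_le_abs_sub s t
      rw [Metric.mem_ball, Real.dist_eq] at hs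
      linarith
    have hD : 0 ≤ D := (abs_nonneg _).trans (hvD x)
    rw [norm_mul, Real.norm_eq_abs, Real.norm_of_nonneg (exp_pos _).le]
    refine mul_le_mul (hvD x) (exp_le_exp.2 ((le_abs_self _).trans ?_)) (exp_pos _).le hD
    exact (abs_add_mul_le_of_abs_le (hwC x) (hvD x) s).trans (by gcongr)
  have hmeas : ∀ s : ℝ, Measurable fun x => exp (w x + s * v x) := by fun_prop
  refine (hasDerivAt_integral_of_dominated_loc_of_deriv_le (Metric.ball_mem_nhds t one_pos)
    (.of_forall fun s => (hmeas s).aestronglyMeasurable) (integrable_exp_add_mul hw hv hwC hvD t)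
    (hv.mul (hmeas t)).aestronglyMeasurable (ae_of_all _ hbound) (integrable_const _)
    (ae_of_all _ fun x s _ => ?_)).2
  simpa [mul_comm] using ((hasDerivAt_mul_const (v x)).const_add (w x)).exp

end MeasureTheory

section ExponentialFamily

variable {α : Measure Ω} {A : Set Ω} {u₀ u₁ : Ω → ℝ} {C : ℝ}

variable (α A u₀ u₁) in
noncomputable def normConst (t : ℝ) : ℝ :=
  ∫ y in A, exp (u₀ y + t * (u₁ y - u₀ y)) ∂α

theorem hdens_eq (t : ℝ) (x : Ω) :
    hdens α A u₀ u₁ t x =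
      A.indicator (fun y => exp (u₀ y + t * (u₁ y - u₀ y))) x / normConst α A u₀ u₁ t :=
  rfl

theorem normConst_nonneg (t : ℝ) : 0 ≤ normConst α A u₀ u₁ t :=
  integral_nonneg fun _ => (exp_pos _).le

theorem hdens_nonneg (t : ℝ) (x : Ω) : 0 ≤ hdens α A u₀ u₁ t x :=
  div_nonneg (indicator_nonneg (fun _ _ => (exp_pos _).le) x) (normConst_nonneg t)

theorem normConst_pos [IsFiniteMeasure α] (hApos : 0 < α A) (hu₀ : Measurable u₀)
    (hu₁ : Measurable u₁) (hbd₀ : ∀ x, |u₀ x| ≤ C) (hbd₁ : ∀ x, |u₁ x| ≤ C) (t : ℝ) :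
    0 < normConst α A u₀ u₁ t :=
  have : NeZero (α.restrict A) := ⟨by simpa [Measure.restrict_eq_zero] using hApos.ne'⟩
  integral_exp_pos (integrable_exp_add_mul hu₀ (hu₁.sub hu₀) hbd₀
    (fun x => abs_sub_le_two_mul_of_abs_le (hbd₀ x) (hbd₁ x)) t)

theorem hasDerivAt_normConst [IsFiniteMeasure α] (hu₀ : Measurable u₀) (hu₁ : Measurable u₁)
    (hbd₀ : ∀ x, |u₀ x| ≤ C) (hbd₁ : ∀ x, |u₁ x| ≤ C) (t : ℝ) :
    HasDerivAt (normConst α A u₀ u₁)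
      (∫ y in A, (u₁ y - u₀ y) * exp (u₀ y + t * (u₁ y - u₀ y)) ∂α) t :=
  hasDerivAt_integral_exp_add_mul hu₀ (hu₁.sub hu₀) hbd₀
    (fun x => abs_sub_le_two_mul_of_abs_le (hbd₀ x) (hbd₁ x)) t

theorem measurable_hdens (hA : MeasurableSet A) (hu₀ : Measurable u₀) (hu₁ : Measurable u₁)
    (t : ℝ) : Measurable (hdens α A u₀ u₁ t) :=
  (Measurable.indicator (by fun_prop) hA).div_const _

theorem integrable_hdens [IsFiniteMeasure α] (hA : MeasurableSet A) (hu₀ : Measurable u₀)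
    (hu₁ : Measurable u₁) (hbd₀ : ∀ x, |u₀ x| ≤ C) (hbd₁ : ∀ x, |u₁ x| ≤ C) (t : ℝ) :
    Integrable (hdens α A u₀ u₁ t) α :=
  (integrable_indicator_iff hA |>.2 (integrable_exp_add_mul hu₀ (hu₁.sub hu₀) hbd₀
    (fun x => abs_sub_le_two_mul_of_abs_le (hbd₀ x) (hbd₁ x)) t)).div_const _

theorem toSignedMeasure_lamMeas [IsFiniteMeasure α] (hA : MeasurableSet A) (hu₀ : Measurable u₀)
    (hu₁ : Measurable u₁) (hbd₀ : ∀ x, |u₀ x| ≤ C) (hbd₁ : ∀ x, |u₁ x| ≤ C) {t : ℝ}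
    [IsFiniteMeasure (lamMeas α A u₀ u₁ t)] :
    (lamMeas α A u₀ u₁ t).toSignedMeasure = α.withDensityᵥ (hdens α A u₀ u₁ t) :=
  -- `lamMeas` is not reducible: restate the instance for the unfolded measure
  have : IsFiniteMeasure (α.withDensity fun x => ENNReal.ofReal (hdens α A u₀ u₁ t x)) := ‹_›
  Measure.toSignedMeasure_withDensity_ofReal (integrable_hdens hA hu₀ hu₁ hbd₀ hbd₁ t)
    (ae_of_all _ (hdens_nonneg t))

theorem integral_lamMeas (hA : MeasurableSet A) (hu₀ : Measurable u₀) (hu₁ : Measurable u₁)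
    (t : ℝ) (φ : Ω → ℝ) :
    ∫ x, φ x ∂(lamMeas α A u₀ u₁ t) = ∫ x, hdens α A u₀ u₁ t x * φ x ∂α := by
  rw [lamMeas, integral_withDensity_eq_integral_toReal_smul
    (measurable_hdens hA hu₀ hu₁ t).ennreal_ofReal (ae_of_all _ fun _ => ENNReal.ofReal_lt_top)]
  simp only [ENNReal.toReal_ofReal (hdens_nonneg _ _), smul_eq_mul]

theorem integral_lamMeas_sub_eq_div_normConst (hA : MeasurableSet A) (hu₀ : Measurable u₀)
    (hu₁ : Measurable u₁) (t : ℝ) :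
    ∫ y, (u₁ y - u₀ y) ∂(lamMeas α A u₀ u₁ t) =
      (∫ y in A, (u₁ y - u₀ y) * exp (u₀ y + t * (u₁ y - u₀ y)) ∂α) / normConst α A u₀ u₁ t := by
  rw [integral_lamMeas hA hu₀ hu₁, ← integral_indicator hA, ← integral_div]
  congr 1 with x
  by_cases hx : x ∈ A
  · simp only [hdens_eq, indicator_of_mem hx]
    ring
  · simp [hdens_eq, hx]

theorem hasDerivAt_hdens [IsFiniteMeasure α] (hA : MeasurableSet A) (hApos : 0 < α A)
    (hu₀ : Measurable u₀) (hu₁ : Measurable u₁) (hbd₀ : ∀ x, |u₀ x| ≤ C)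
    (hbd₁ : ∀ x, |u₁ x| ≤ C) (t : ℝ) (x : Ω) :
    HasDerivAt (hdens α A u₀ u₁ · x) (hdens α A u₀ u₁ t x *
      (u₁ x - u₀ x - ∫ y, (u₁ y - u₀ y) ∂(lamMeas α A u₀ u₁ t))) t := by
  rw [integral_lamMeas_sub_eq_div_normConst hA hu₀ hu₁]
  by_cases hx : x ∈ A
  · simp only [hdens_eq, indicator_of_mem hx]
    have hexp : HasDerivAt (fun s => exp (u₀ x + s * (u₁ x - u₀ x)))
        ((u₁ x - u₀ x) * exp (u₀ x + t * (u₁ x - u₀ x))) t := by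
      simpa [mul_comm] using ((hasDerivAt_mul_const (u₁ x - u₀ x)).const_add (u₀ x)).exp
    have hZ := (normConst_pos hApos hu₀ hu₁ hbd₀ hbd₁ t).ne'
    refine (hexp.div (hasDerivAt_normConst hu₀ hu₁ hbd₀ hbd₁ t) hZ).congr_deriv ?_
    field_simp
  · simpa [hdens_eq, hx] using hasDerivAt_const t (0 : ℝ)

theorem measurable_uncurry_hdens [IsFiniteMeasure α] (hA : MeasurableSet A) (hApos : 0 < α A)
    (hu₀ : Measurable u₀) (hu₁ : Measurable u₁) (hbd₀ : ∀ x, |u₀ x| ≤ C)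
    (hbd₁ : ∀ x, |u₁ x| ≤ C) : Measurable (Function.uncurry (hdens α A u₀ u₁)) :=
  measurable_uncurry_of_continuous_of_measurable
    (fun x => continuous_iff_continuousAt.2 fun t =>
      (hasDerivAt_hdens hA hApos hu₀ hu₁ hbd₀ hbd₁ t x).continuousAt)
    (measurable_hdens hA hu₀ hu₁)

theorem measurable_integral_lamMeas_sub [IsFiniteMeasure α] (hA : MeasurableSet A)
    (hu₀ : Measurable u₀) (hu₁ : Measurable u₁) (hbd₀ : ∀ x, |u₀ x| ≤ C)
    (hbd₁ : ∀ x, |u₁ x| ≤ C) :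
    Measurable fun t => ∫ y, (u₁ y - u₀ y) ∂(lamMeas α A u₀ u₁ t) := by
  have hderiv := hasDerivAt_normConst (α := α) (A := A) hu₀ hu₁ hbd₀ hbd₁
  simp only [integral_lamMeas_sub_eq_div_normConst hA hu₀ hu₁, ← fun t => (hderiv t).deriv]
  exact (measurable_deriv _).div
    (continuous_iff_continuousAt.2 fun t => (hderiv t).continuousAt).measurable

theorem hdens_le [IsFiniteMeasure α] (hA : MeasurableSet A) (hApos : 0 < α A)
    (hu₀ : Measurable u₀) (hu₁ : Measurable u₁) (hbd₀ : ∀ x, |u₀ x| ≤ C) (hbd₁ : ∀ x, |u₁ x| ≤ C)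
    {t : ℝ} (ht : t ∈ Icc (0 : ℝ) 1) (x : Ω) :
    hdens α A u₀ u₁ t x ≤ exp C / (exp (-C) * α.real A) := by
  have hut : ∀ y, |u₀ y + t * (u₁ y - u₀ y)| ≤ C := fun y =>
    abs_add_mul_sub_le_of_abs_le (hbd₀ y) (hbd₁ y) ht
  have hZ : exp (-C) * α.real A ≤ normConst α A u₀ u₁ t :=
    setIntegral_ge_of_const_le_real hA (measure_ne_top α A)
      (fun y _ => exp_le_exp.2 (neg_le_of_abs_le (hut y)))
      (integrable_exp_add_mul hu₀ (hu₁.sub hu₀) hbd₀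
        (fun y => abs_sub_le_two_mul_of_abs_le (hbd₀ y) (hbd₁ y)) t)
  refine div_le_div₀ (exp_pos _).le ?_ (mul_pos (exp_pos _) ?_) hZ
  · exact indicator_le' (fun y _ => exp_le_exp.2 (le_of_abs_le (hut y)))
      (fun _ _ => (exp_pos _).le) x
  · exact ENNReal.toReal_pos hApos.ne' (measure_ne_top α A)

theorem integrable_uncurry_hdens_mul_sub [IsFiniteMeasure α] (hA : MeasurableSet A)
    (hApos : 0 < α A) (hu₀ : Measurable u₀) (hu₁ : Measurable u₁) (hbd₀ : ∀ x, |u₀ x| ≤ C)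
    (hbd₁ : ∀ x, |u₁ x| ≤ C) (hprob : ∀ t, IsProbabilityMeasure (lamMeas α A u₀ u₁ t)) :
    Integrable (Function.uncurry fun t x => hdens α A u₀ u₁ t x *
        (u₁ x - u₀ x - ∫ y, (u₁ y - u₀ y) ∂(lamMeas α A u₀ u₁ t)))
      ((volume.restrict (Ioc (0 : ℝ) 1)).prod α) := by
  have hv : ∀ x, |u₁ x - u₀ x| ≤ 2 * C := fun x => abs_sub_le_two_mul_of_abs_le (hbd₀ x) (hbd₁ x)
  have hmean : ∀ t, |∫ y, (u₁ y - u₀ y) ∂(lamMeas α A u₀ u₁ t)| ≤ 2 * C := fun t => by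
    simpa using norm_integral_le_of_norm_le_const (μ := lamMeas α A u₀ u₁ t)
      (f := fun y => u₁ y - u₀ y) (ae_of_all _ hv)
  have hmeas : Measurable (Function.uncurry fun t x => hdens α A u₀ u₁ t x *
      (u₁ x - u₀ x - ∫ y, (u₁ y - u₀ y) ∂(lamMeas α A u₀ u₁ t))) :=
    (measurable_uncurry_hdens hA hApos hu₀ hu₁ hbd₀ hbd₁).mul
      ((by fun_prop : Measurable fun p : ℝ × Ω => u₁ p.2 - u₀ p.2).sub
        ((measurable_integral_lamMeas_sub hA hu₀ hu₁ hbd₀ hbd₁).comp measurable_fst))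
  have hmem : ∀ᵐ p ∂(volume.restrict (Ioc (0 : ℝ) 1)).prod α, p.1 ∈ Icc (0 : ℝ) 1 := by
    rw [Measure.restrict_prod_eq_prod_univ]
    filter_upwards [ae_restrict_mem (measurableSet_Ioc.prod MeasurableSet.univ)] with p hp
    exact Ioc_subset_Icc_self hp.1
  refine .of_bound hmeas.aestronglyMeasurable
    (exp C / (exp (-C) * α.real A) * (2 * C + 2 * C)) ?_
  filter_upwards [hmem] with p hp
  have hh := hdens_le hA hApos hu₀ hu₁ hbd₀ hbd₁ hp p.2
  rw [Real.norm_eq_abs, Function.uncurry_apply_pair, abs_mul, abs_of_nonneg (hdens_nonneg _ _)]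
  exact mul_le_mul hh ((abs_sub _ _).trans (add_le_add (hv p.2) (hmean p.1))) (abs_nonneg _)
    ((hdens_nonneg _ _).trans hh)

end ExponentialFamily

theorem stmt_13 (α : Measure Ω) [IsFiniteMeasure α] (A : Set Ω) (hA : MeasurableSet A)
    (hApos : 0 < α A) (u₀ u₁ : Ω → ℝ) (hu₀ : Measurable u₀) (hu₁ : Measurable u₁)
    (C : ℝ) (hbd₀ : ∀ x, |u₀ x| ≤ C) (hbd₁ : ∀ x, |u₁ x| ≤ C)
    (hprob : ∀ t : ℝ, IsProbabilityMeasure (lamMeas α A u₀ u₁ t)) :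
    (((lamMeas α A u₀ u₁ 1).toSignedMeasure -
        (lamMeas α A u₀ u₁ 0).toSignedMeasure).totalVariation Set.univ).toReal ≤
      ∫ t in (0:ℝ)..1, ∫ x,
        |(u₁ x - u₀ x) - ∫ y, (u₁ y - u₀ y) ∂(lamMeas α A u₀ u₁ t)|
          ∂(lamMeas α A u₀ u₁ t) := by
  have hint : ∀ t, Integrable (hdens α A u₀ u₁ t) α := integrable_hdens hA hu₀ hu₁ hbd₀ hbd₁
  have hsigned : (lamMeas α A u₀ u₁ 1).toSignedMeasure - (lamMeas α A u₀ u₁ 0).toSignedMeasure =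
      α.withDensityᵥ (hdens α A u₀ u₁ 1 - hdens α A u₀ u₁ 0) := by
    rw [withDensityᵥ_sub (hint 1) (hint 0), toSignedMeasure_lamMeas hA hu₀ hu₁ hbd₀ hbd₁,
      toSignedMeasure_lamMeas hA hu₀ hu₁ hbd₀ hbd₁]
  calc _ ≤ ∫ x, |hdens α A u₀ u₁ 1 x - hdens α A u₀ u₁ 0 x| ∂α := by
        rw [hsigned]
        exact SignedMeasure.totalVariation_withDensityᵥ_toReal_le ((hint 1).sub (hint 0))
    _ ≤ ∫ t in (0:ℝ)..1, ∫ x, |hdens α A u₀ u₁ t x *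
          (u₁ x - u₀ x - ∫ y, (u₁ y - u₀ y) ∂(lamMeas α A u₀ u₁ t))| ∂α :=
        integral_abs_sub_le_intervalIntegral_integral_abs_deriv zero_le_one
          (fun x t _ => hasDerivAt_hdens hA hApos hu₀ hu₁ hbd₀ hbd₁ t x)
          (integrable_uncurry_hdens_mul_sub hA hApos hu₀ hu₁ hbd₀ hbd₁ hprob)
    _ = _ := by
        congr 1 with t
        simp only [integral_lamMeas hA hu₀ hu₁, abs_mul, abs_of_nonneg (hdens_nonneg _ _)]
end
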